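/- arXiv:1507.00290 — 11 statements merged into one kernel-verified Lean document; each statement's English description precedes it below -/
import Mathlib

section
/- For any closed convex cone K and integer k ≥ 1, the order-k facial reduction cone FR_k(K) is a convex cone: it is closed under nonnegative scalar multiplication and under addition. In particular, if (y_1,…,y_k) ∈ FR_k(K) and (z_1,…,z_k) ∈ FR_k(K), then (y_1+z_1,…,y_k+z_k) ∈ FR_k(K). -/
open scoped RealInnerProductSpace

variable {Y : Type*} [NormedAddCommGroup Y] [InnerProductSpace ℝ Y] [FiniteDimensional ℝ Y]

/-- The dual cone of a set `S`: all vectors having nonnegative inner product with every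
element of `S`. -/
def dualSet (S : Set Y) : Set Y := {y | ∀ x ∈ S, 0 ≤ ⟪x, y⟫}

/-- The orthogonal complement (as a set) of the span of `S`. -/
def perpSet (S : Set Y) : Set Y := {y | ∀ x ∈ S, ⟪x, y⟫ = 0}

/-- `K ∩ y₁^⊥ ∩ … ∩ y_{i-1}^⊥`. -/
def frCut {k : ℕ} (K : Set Y) (y : Fin k → Y) (i : Fin k) : Set Y :=
  K ∩ {x | ∀ j : Fin k, j < i → ⟪y j, x⟫ = 0}

/-- Membership in the order-`k` facial reduction cone `FR_k(K)`:
`y₁ ∈ K*` and `y_i ∈ (K ∩ y₁^⊥ ∩ … ∩ y_{i-1}^⊥)*` for each `i`. -/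
def IsFRSeq {k : ℕ} (K : Set Y) (y : Fin k → Y) : Prop :=
  ∀ i : Fin k, y i ∈ dualSet (frCut K y i)


section

variable {E : Type*} [NormedAddCommGroup E] [InnerProductSpace ℝ E]
  {K : Set E} {k : ℕ} {y z : Fin k → E}

theorem frCut_antitone : Antitone (frCut K y) :=
  fun _ _ hji _ hx => ⟨hx.1, fun l hl => hx.2 l (hl.trans_le hji)⟩

theorem frCut_smul {c : ℝ} (hc : 0 < c) (i : Fin k) : frCut K (c • y) i = frCut K y i := by
  ext x
  simp only [frCut, Set.mem_inter_iff, Set.mem_ofPred_eq, Pi.smul_apply, real_inner_smul_left,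
    mul_eq_zero, hc.ne', false_or]

/-- Nonnegativity of `⟪x, y j⟫` and `⟪x, z j⟫` turns `⟪x, y j + z j⟫ = 0` into two equations,
so inductively the cuts of `y + z` lie in those of `y` and of `z`. -/
theorem frCut_add_subset (hy : IsFRSeq K y) (hz : IsFRSeq K z) (i : Fin k) :
    frCut K (y + z) i ⊆ frCut K y i ∩ frCut K z i := by
  induction i using WellFoundedLT.induction with
  | _ i ih =>
    intro x hx
    have hyz : ∀ j < i, ⟪x, y j⟫ = 0 ∧ ⟪x, z j⟫ = 0 := by
      intro j hj
      obtain ⟨hxy, hxz⟩ := ih j hj (frCut_antitone hj.le hx)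
      have hsum : ⟪x, y j⟫ + ⟪x, z j⟫ = 0 := by
        rw [← inner_add_right, real_inner_comm]
        exact hx.2 j hj
      exact (add_eq_zero_iff_of_nonneg (hy j x hxy) (hz j x hxz)).1 hsum
    exact ⟨⟨hx.1, fun j hj => (real_inner_comm _ _).trans (hyz j hj).1⟩,
      ⟨hx.1, fun j hj => (real_inner_comm _ _).trans (hyz j hj).2⟩⟩

theorem IsFRSeq.smul {c : ℝ} (hc : 0 ≤ c) (hy : IsFRSeq K y) : IsFRSeq K (c • y) := by
  intro i x hx
  rw [Pi.smul_apply, real_inner_smul_right]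
  rcases hc.eq_or_lt with rfl | hc
  · rw [zero_mul]
  · exact mul_nonneg hc.le (hy i x ((frCut_smul hc i).subset hx))

theorem IsFRSeq.add (hy : IsFRSeq K y) (hz : IsFRSeq K z) : IsFRSeq K (y + z) := by
  intro i x hx
  obtain ⟨hxy, hxz⟩ := frCut_add_subset hy hz i hx
  rw [Pi.add_apply, inner_add_right]
  exact add_nonneg (hy i x hxy) (hz i x hxz)

end

theorem stmt_1_general (K : Set Y)
    (k : ℕ) :
    (∀ c : ℝ, 0 ≤ c → ∀ y : Fin k → Y, IsFRSeq K y → IsFRSeq K (fun i => c • y i)) ∧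
    (∀ y z : Fin k → Y, IsFRSeq K y → IsFRSeq K z →
      IsFRSeq K (fun i => y i + z i)) :=
  ⟨fun _ hc _ hy => hy.smul hc, fun _ _ hy hz => hy.add hz⟩

/-- For a closed convex cone `K` and `k ≥ 1`, the facial reduction cone `FR_k(K)` is a
convex cone: closed under nonnegative scaling and under addition. -/
theorem stmt_1 (K : Set Y) (hKcl : IsClosed K) (hKconv : Convex ℝ K)
    (hKcone : ∀ c : ℝ, 0 ≤ c → ∀ x ∈ K, c • x ∈ K) (hK0 : (0 : Y) ∈ K)
    (k : ℕ) (hk : 1 ≤ k) :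
    (∀ c : ℝ, 0 ≤ c → ∀ y : Fin k → Y, IsFRSeq K y → IsFRSeq K (fun i => c • y i)) ∧
    (∀ y z : Fin k → Y, IsFRSeq K y → IsFRSeq K z →
      IsFRSeq K (fun i => y i + z i)) :=
  stmt_1_general K k
end

section
/- Let K and C be closed convex cones in finite-dimensional Euclidean spaces. Then ((y_1,z_1),…,(y_k,z_k)) ∈ FR_k(K × C) if and only if (y_1,…,y_k) ∈ FR_k(K) and (z_1,…,z_k) ∈ FR_k(C). -/
/-
Write `w_j = (y_j, z_j)`. A point `p ∈ K × C` is orthogonal to `w_j` exactly when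
`⟪p.1, y_j⟫ + ⟪p.2, z_j⟫ = 0`. If `(y_j)` and `(z_j)` are facial reduction sequences for `K` and
`C`, induction on `j` shows that both summands are nonnegative, hence both vanish, so the `j`-th
face of `K × C` is the product of the `j`-th faces of `K` and `C`. Conversely, embedding `K` as
`K × {0}` and `C` as `{0} × C` recovers the component sequences from a sequence for `K × C`.
-/

open scoped RealInnerProductSpace

variable {Y : Type*} [NormedAddCommGroup Y] [InnerProductSpace ℝ Y] [FiniteDimensional ℝ Y]

section Prod

variable {E F : Type*} [NormedAddCommGroup E] [InnerProductSpace ℝ E]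
  [NormedAddCommGroup F] [InnerProductSpace ℝ F]

def prodCone (K : Set E) (C : Set F) : Set (WithLp 2 (E × F)) :=
  {p | p.fst ∈ K ∧ p.snd ∈ C}

variable {K : Set E} {C : Set F} {k : ℕ} {w : Fin k → WithLp 2 (E × F)}

theorem toLp_inl_mem_frCut_prodCone (hC0 : (0 : F) ∈ C) {i : Fin k} {x : E}
    (hx : x ∈ frCut K (fun j => (w j).fst) i) :
    WithLp.toLp 2 (x, (0 : F)) ∈ frCut (prodCone K C) w i :=
  ⟨⟨hx.1, hC0⟩, fun j hj => by simpa using hx.2 j hj⟩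

theorem toLp_inr_mem_frCut_prodCone (hK0 : (0 : E) ∈ K) {i : Fin k} {x : F}
    (hx : x ∈ frCut C (fun j => (w j).snd) i) :
    WithLp.toLp 2 ((0 : E), x) ∈ frCut (prodCone K C) w i :=
  ⟨⟨hK0, hx.1⟩, fun j hj => by simpa using hx.2 j hj⟩

theorem IsFRSeq.fst_of_prodCone (h : IsFRSeq (prodCone K C) w) (hC0 : (0 : F) ∈ C) :
    IsFRSeq K fun i => (w i).fst :=
  fun i _ hx => by simpa using h i _ (toLp_inl_mem_frCut_prodCone hC0 hx)

theorem IsFRSeq.snd_of_prodCone (h : IsFRSeq (prodCone K C) w) (hK0 : (0 : E) ∈ K) :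
    IsFRSeq C fun i => (w i).snd :=
  fun i _ hx => by simpa using h i _ (toLp_inr_mem_frCut_prodCone hK0 hx)

theorem inner_fst_eq_zero_and_inner_snd_eq_zero_of_mem_frCut_prodCone
    (hK : IsFRSeq K fun i => (w i).fst) (hC : IsFRSeq C fun i => (w i).snd)
    {i : Fin k} {p : WithLp 2 (E × F)} (hp : p ∈ frCut (prodCone K C) w i) :
    ∀ j < i, ⟪(w j).fst, p.fst⟫ = 0 ∧ ⟪(w j).snd, p.snd⟫ = 0 := by
  intro j
  induction j using Fin.strong_induction_on with
  | _ j ih =>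
    intro hji
    have hfst : 0 ≤ ⟪(w j).fst, p.fst⟫ := by
      rw [real_inner_comm]
      exact hK j _ ⟨hp.1.1, fun l hl => (ih l hl (hl.trans hji)).1⟩
    have hsnd : 0 ≤ ⟪(w j).snd, p.snd⟫ := by
      rw [real_inner_comm]
      exact hC j _ ⟨hp.1.2, fun l hl => (ih l hl (hl.trans hji)).2⟩
    exact (add_eq_zero_iff_of_nonneg hfst hsnd).1 (hp.2 j hji)

theorem IsFRSeq.prodCone (hK : IsFRSeq K fun i => (w i).fst)
    (hC : IsFRSeq C fun i => (w i).snd) : IsFRSeq (prodCone K C) w := fun i p hp => by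
  have horth := inner_fst_eq_zero_and_inner_snd_eq_zero_of_mem_frCut_prodCone hK hC hp
  exact add_nonneg (hK i _ ⟨hp.1.1, fun j hj => (horth j hj).1⟩)
    (hC i _ ⟨hp.1.2, fun j hj => (horth j hj).2⟩)

end Prod

theorem stmt_3_general {Z : Type*} [NormedAddCommGroup Z] [InnerProductSpace ℝ Z]
    (K : Set Y) (hK0 : (0 : Y) ∈ K)
    (C : Set Z) (hC0 : (0 : Z) ∈ C)
    (k : ℕ) (w : Fin k → WithLp 2 (Y × Z)) :
    IsFRSeq {p : WithLp 2 (Y × Z) |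
        (WithLp.equiv 2 (Y × Z) p).1 ∈ K ∧ (WithLp.equiv 2 (Y × Z) p).2 ∈ C} w ↔
      IsFRSeq K (fun i => (WithLp.equiv 2 (Y × Z) (w i)).1) ∧
      IsFRSeq C (fun i => (WithLp.equiv 2 (Y × Z) (w i)).2) :=
  ⟨fun h => ⟨h.fst_of_prodCone hC0, h.snd_of_prodCone hK0⟩,
    fun ⟨hK, hC⟩ => IsFRSeq.prodCone hK hC⟩

/-- `((y_1,z_1),...,(y_k,z_k)) ∈ FR_k(K × C)` iff `(y_1,...,y_k) ∈ FR_k(K)` and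
`(z_1,...,z_k) ∈ FR_k(C)`. The product space carries the L² inner product. -/
theorem stmt_3 {Z : Type*} [NormedAddCommGroup Z] [InnerProductSpace ℝ Z]
    [FiniteDimensional ℝ Z]
    (K : Set Y) (hKcl : IsClosed K) (hKconv : Convex ℝ K)
    (hKcone : ∀ c : ℝ, 0 ≤ c → ∀ x ∈ K, c • x ∈ K) (hK0 : (0 : Y) ∈ K)
    (C : Set Z) (hCcl : IsClosed C) (hCconv : Convex ℝ C)
    (hCcone : ∀ c : ℝ, 0 ≤ c → ∀ x ∈ C, c • x ∈ C) (hC0 : (0 : Z) ∈ C)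
    (k : ℕ) (w : Fin k → WithLp 2 (Y × Z)) :
    IsFRSeq {p : WithLp 2 (Y × Z) |
        (WithLp.equiv 2 (Y × Z) p).1 ∈ K ∧ (WithLp.equiv 2 (Y × Z) p).2 ∈ C} w ↔
      IsFRSeq K (fun i => (WithLp.equiv 2 (Y × Z) (w i)).1) ∧
      IsFRSeq C (fun i => (WithLp.equiv 2 (Y × Z) (w i)).2) :=
  stmt_3_general K hK0 C hC0 k w
end

section
/- Let K be a closed convex cone, A : ℝ^m → Y a linear map with rows a_1,…,a_m ∈ Y, and c ∈ ℝ^m. Suppose there exist ℓ ≥ 0 and (y_1,…,y_{ℓ+1}) ∈ FR_{ℓ+1}(K) with A* y_i = 0 for i = 1,…,ℓ and A* y_{ℓ+1} = c. Then the system { x ∈ ℝ^m : A x ∈ K, ⟨c,x⟩ = −1 } is infeasible; that is, the conic program inf{⟨b,y⟩ : A*y = c, y ∈ K*} is not strongly infeasible. -/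
/-! A point `x = Σ xⱼ aⱼ` of `K` is orthogonal to every `y_i` with `A* y_i = 0`, so it lies in
`K ∩ y₁^⊥ ∩ … ∩ y_ℓ^⊥`; hence `0 ≤ ⟨x, y_{ℓ+1}⟩ = ⟨c, x⟩`, which rules out `⟨c, x⟩ = -1`. -/

open scoped RealInnerProductSpace

variable {Y : Type*} [NormedAddCommGroup Y] [InnerProductSpace ℝ Y] [FiniteDimensional ℝ Y]

theorem real_inner_sum_smul_left {E ι : Type*} [NormedAddCommGroup E] [InnerProductSpace ℝ E]
    [Fintype ι] (x : ι → ℝ) (a : ι → E) (v : E) :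
    ⟪∑ j, x j • a j, v⟫ = ∑ j, x j * ⟪a j, v⟫ := by
  simp only [sum_inner, real_inner_smul_left]

theorem real_inner_sum_smul_eq_zero {E ι : Type*} [NormedAddCommGroup E]
    [InnerProductSpace ℝ E] [Fintype ι] (x : ι → ℝ) {a : ι → E} {v : E}
    (h : ∀ j, ⟪a j, v⟫ = 0) : ⟪v, ∑ j, x j • a j⟫ = 0 := by
  rw [real_inner_comm, real_inner_sum_smul_left]
  simp [h]

theorem IsFRSeq.inner_nonneg {E : Type*} [NormedAddCommGroup E] [InnerProductSpace ℝ E]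
    {K : Set E} {k : ℕ} {y : Fin k → E} (hy : IsFRSeq K y) (i : Fin k) {x : E} (hx : x ∈ K)
    (hperp : ∀ j < i, ⟪y j, x⟫ = 0) : 0 ≤ ⟪x, y i⟫ :=
  hy i x ⟨hx, hperp⟩

theorem stmt_5_general (K : Set Y)
    (m l : ℕ) (a : Fin m → Y) (c : Fin m → ℝ)
    (y : Fin (l + 1) → Y) (hy : IsFRSeq K y)
    (hzero : ∀ i : Fin (l + 1), (i : ℕ) < l → ∀ j : Fin m, ⟪a j, y i⟫ = 0)
    (hc : ∀ j : Fin m, ⟪a j, y (Fin.last l)⟫ = c j) :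
    ¬ ∃ x : Fin m → ℝ, (∑ j, x j • a j) ∈ K ∧ (∑ j, c j * x j) = -1 := by
  rintro ⟨x, hxK, hcx⟩
  have hperp : ∀ i < Fin.last l, ⟪y i, ∑ j, x j • a j⟫ = 0 := fun i hi =>
    real_inner_sum_smul_eq_zero x (hzero i hi)
  have hnonneg := hy.inner_nonneg (Fin.last l) hxK hperp
  have hpairing : ⟪∑ j, x j • a j, y (Fin.last l)⟫ = ∑ j, c j * x j := by
    simp only [real_inner_sum_smul_left, hc, mul_comm]
  linarith

/-- If `(y_1,...,y_{l+1})` is in `FR_{l+1}(K)` with `A* y_i = 0` for `i ≤ l` and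
`A* y_{l+1} = c`, then the alternative system `Ax ∈ K, ⟨c,x⟩ = -1` is infeasible,
i.e. the dual system is not strongly infeasible. -/
theorem stmt_5 (K : Set Y) (hKcl : IsClosed K) (hKconv : Convex ℝ K)
    (hKcone : ∀ c : ℝ, 0 ≤ c → ∀ x ∈ K, c • x ∈ K) (hK0 : (0 : Y) ∈ K)
    (m l : ℕ) (a : Fin m → Y) (c : Fin m → ℝ)
    (y : Fin (l + 1) → Y) (hy : IsFRSeq K y)
    (hzero : ∀ i : Fin (l + 1), (i : ℕ) < l → ∀ j : Fin m, ⟪a j, y i⟫ = 0)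
    (hc : ∀ j : Fin m, ⟪a j, y (Fin.last l)⟫ = c j) :
    ¬ ∃ x : Fin m → ℝ, (∑ j, x j • a j) ∈ K ∧ (∑ j, c j * x j) = -1 :=
  stmt_5_general K m l a c y hy hzero hc
end

section
/- Let K be a closed convex cone, A : ℝ^m → Y linear, b ∈ Y, c ∈ ℝ^m. Suppose x ∈ ℝ^m satisfies b − Ax ∈ K, and (y_1,…,y_{k+1}) ∈ FR_{k+1}(K) satisfies A* y_i = 0 and ⟨b, y_i⟩ = 0 for i = 1,…,k, and A* y_{k+1} = c. Then ⟨b, y_{k+1}⟩ ≥ ⟨c, x⟩ (weak duality for the extended dual). -/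
open scoped RealInnerProductSpace

variable {Y : Type*} [NormedAddCommGroup Y] [InnerProductSpace ℝ Y] [FiniteDimensional ℝ Y]

section

variable {E : Type*} [NormedAddCommGroup E] [InnerProductSpace ℝ E]

theorem inner_sub_sum_smul {ι : Type*} (t : Finset ι) (b v : E) (a : ι → E) (x : ι → ℝ) :
    ⟪b - ∑ j ∈ t, x j • a j, v⟫ = ⟪b, v⟫ - ∑ j ∈ t, x j * ⟪a j, v⟫ := by
  simp only [inner_sub_left, sum_inner, real_inner_smul_left]

end

theorem stmt_7_general (K : Set Y) (m k : ℕ) (a : Fin m → Y) (b : Y) (c : Fin m → ℝ)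
    (x : Fin m → ℝ) (hx : b - ∑ j, x j • a j ∈ K)
    (y : Fin (k + 1) → Y) (hy : IsFRSeq K y)
    (hzero : ∀ i : Fin (k + 1), (i : ℕ) < k →
      (∀ j : Fin m, ⟪a j, y i⟫ = 0) ∧ ⟪b, y i⟫ = 0)
    (hc : ∀ j : Fin m, ⟪a j, y (Fin.last k)⟫ = c j) :
    (∑ j, c j * x j) ≤ ⟪b, y (Fin.last k)⟫ := by
  set s := b - ∑ j, x j • a j
  have hs_orth : ∀ i < Fin.last k, ⟪y i, s⟫ = 0 := fun i hi => by
    obtain ⟨hAi, hbi⟩ := hzero i hi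
    rw [real_inner_comm, inner_sub_sum_smul, hbi]
    simp [hAi]
  have hs_nonneg : 0 ≤ ⟪s, y (Fin.last k)⟫ := hy (Fin.last k) s ⟨hx, hs_orth⟩
  rw [inner_sub_sum_smul] at hs_nonneg
  simp only [hc, mul_comm (x _)] at hs_nonneg
  linarith

/-- Weak duality for the extended dual: if `b - Ax ∈ K` and `(y_1,...,y_{k+1})` is in
`FR_{k+1}(K)` with `A* y_i = 0, ⟨b,y_i⟩ = 0` for `i ≤ k` and `A* y_{k+1} = c`, then
`⟨c,x⟩ ≤ ⟨b, y_{k+1}⟩`. -/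
theorem stmt_7 (K : Set Y) (hKcl : IsClosed K) (hKconv : Convex ℝ K)
    (hKcone : ∀ c : ℝ, 0 ≤ c → ∀ x ∈ K, c • x ∈ K) (hK0 : (0 : Y) ∈ K)
    (m k : ℕ) (a : Fin m → Y) (b : Y) (c : Fin m → ℝ)
    (x : Fin m → ℝ) (hx : b - ∑ j, x j • a j ∈ K)
    (y : Fin (k + 1) → Y) (hy : IsFRSeq K y)
    (hzero : ∀ i : Fin (k + 1), (i : ℕ) < k →
      (∀ j : Fin m, ⟪a j, y i⟫ = 0) ∧ ⟪b, y i⟫ = 0)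
    (hc : ∀ j : Fin m, ⟪a j, y (Fin.last k)⟫ = c j) :
    (∑ j, c j * x j) ≤ ⟪b, y (Fin.last k)⟫ :=
  stmt_7_general K m k a b c x hx y hy hzero hc
end

section
/- Let K be a closed convex cone, a_1,…,a_m, b ∈ Y with (a_1,…,a_ℓ, b) ∈ FR_{ℓ+1}(K*) for some 0 ≤ ℓ ≤ m. Then the system { x ∈ ℝ^m : b − Σ_{i=1}^m x_i a_i ∈ K } is not strongly infeasible; that is, there is no y ∈ K* with ⟨a_i, y⟩ = 0 for all i = 1,…,m and ⟨b, y⟩ = −1. -/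
open scoped RealInnerProductSpace

variable {Y : Type*} [NormedAddCommGroup Y] [InnerProductSpace ℝ Y] [FiniteDimensional ℝ Y]

omit [FiniteDimensional ℝ Y] in
theorem mem_frCut_last_snoc {k : ℕ} {K : Set Y} {z : Fin k → Y} {c x : Y} (hx : x ∈ K)
    (hzx : ∀ j, ⟪z j, x⟫ = 0) : x ∈ frCut K (Fin.snoc (α := fun _ => Y) z c) (Fin.last k) := by
  refine ⟨hx, fun j hj => ?_⟩
  rw [← Fin.castSucc_castLT j hj, Fin.snoc_castSucc]
  exact hzx _

omit [FiniteDimensional ℝ Y] in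
theorem IsFRSeq.inner_snoc_last_nonneg {k : ℕ} {K : Set Y} {z : Fin k → Y} {c x : Y}
    (hfr : IsFRSeq K (Fin.snoc (α := fun _ => Y) z c)) (hx : x ∈ K)
    (hzx : ∀ j, ⟪z j, x⟫ = 0) : 0 ≤ ⟪c, x⟫ := by
  have h := hfr (Fin.last k) x (mem_frCut_last_snoc hx hzx)
  rwa [Fin.snoc_last, real_inner_comm] at h

theorem stmt_9_general (K : Set Y)
    (m l : ℕ) (hl : l ≤ m) (a : Fin m → Y) (b : Y)
    (hfr : IsFRSeq (dualSet K) (Fin.snoc (fun i : Fin l => a (Fin.castLE hl i)) b)) :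
    ¬ ∃ y ∈ dualSet K, (∀ i : Fin m, ⟪a i, y⟫ = 0) ∧ ⟪b, y⟫ = -1 := by
  rintro ⟨y, hyK, hay, hby⟩
  have hby_nonneg : 0 ≤ ⟪b, y⟫ := hfr.inner_snoc_last_nonneg hyK fun j => hay _
  linarith

/-- If `(a_1,...,a_l,b)` is in `FR_{l+1}(K*)` with `l ≤ m`, then the primal system
`b - Σ x_i a_i ∈ K` is not strongly infeasible: there is no `y ∈ K*` with
`⟨a_i, y⟩ = 0` for all `i` and `⟨b, y⟩ = -1`. -/
theorem stmt_9 (K : Set Y) (hKcl : IsClosed K) (hKconv : Convex ℝ K)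
    (hKcone : ∀ c : ℝ, 0 ≤ c → ∀ x ∈ K, c • x ∈ K) (hK0 : (0 : Y) ∈ K)
    (m l : ℕ) (hl : l ≤ m) (a : Fin m → Y) (b : Y)
    (hfr : IsFRSeq (dualSet K) (Fin.snoc (fun i : Fin l => a (Fin.castLE hl i)) b)) :
    ¬ ∃ y ∈ dualSet K, (∀ i : Fin m, ⟪a i, y⟫ = 0) ∧ ⟪b, y⟫ = -1 :=
  stmt_9_general K m l hl a b hfr
end

section
/- For a closed convex cone K that is not a linear subspace and an integer k ≥ 2, the facial reduction cone FR_k(K) is not closed. Conversely, if K is a linear subspace or k = 1, then FR_k(K) is closed. -/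
open scoped RealInnerProductSpace

variable {Y : Type*} [NormedAddCommGroup Y] [InnerProductSpace ℝ Y] [FiniteDimensional ℝ Y]

/-!
If `K` is not a subspace, pick `x ∈ K` with `-x ∉ K` and separate `-x` from `K` by some
`z ∈ K*`, so that `⟪x, z⟫ > 0`. For `a > 0` the sequence `(a z, -z, 0, …, 0)` lies in
`FR_k(K)`, since the cut `K ∩ (a z)^⊥` only sees vectors orthogonal to `z`. Its limit
`(0, -z, 0, …, 0)` as `a → 0⁺` does not: the cut is then all of `K`, and `⟪x, -z⟫ < 0`.

If `K = S` is a subspace, then `S* = S^⊥`, so by induction every cut is `S` itself and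
`FR_k(S) = (S^⊥)^k`; and `FR_1(K) = K*`. Both are closed.
-/

lemma Convex.add_mem_of_forall_smul_mem {E : Type*} [AddCommGroup E] [Module ℝ E] {K : Set E}
    (hK : Convex ℝ K) (hcone : ∀ c : ℝ, 0 ≤ c → ∀ x ∈ K, c • x ∈ K) {a b : E}
    (ha : a ∈ K) (hb : b ∈ K) : a + b ∈ K := by
  have hmid : (1 / 2 : ℝ) • a + (1 / 2 : ℝ) • b ∈ K :=
    hK ha hb (by norm_num) (by norm_num) (by norm_num)
  simpa [smul_add, smul_smul] using hcone 2 zero_le_two _ hmid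

lemma PointedCone.exists_mem_neg_notMem {E : Type*} [AddCommGroup E] [Module ℝ E]
    (C : PointedCone ℝ E) (hC : ¬ ∃ S : Submodule ℝ E, (C : Set E) = S) :
    ∃ x ∈ C, -x ∉ C := by
  by_contra! hneg
  exact hC ⟨C.lineal, Set.ext fun x => ⟨fun hx => ⟨hx, hneg x hx⟩, And.left⟩⟩

variable {E : Type*} [NormedAddCommGroup E] [InnerProductSpace ℝ E]

def ProperCone.ofIsClosedConvex (K : Set E) (hKcl : IsClosed K) (hKconv : Convex ℝ K)
    (hKcone : ∀ c : ℝ, 0 ≤ c → ∀ x ∈ K, c • x ∈ K) (hK0 : (0 : E) ∈ K) :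
    ProperCone ℝ E where
  carrier := K
  add_mem' := hKconv.add_mem_of_forall_smul_mem hKcone
  zero_mem' := hK0
  smul_mem' c _ hx := hKcone c c.2 _ hx
  isClosed' := hKcl

lemma isClosed_dualSet (S : Set E) : IsClosed (dualSet S) := by
  simp only [dualSet, Set.ofPred_forall]
  exact isClosed_biInter fun x _ =>
    isClosed_le continuous_const (continuous_const.inner continuous_id)

lemma perpSet_submodule (S : Submodule ℝ E) : perpSet (S : Set E) = Sᗮ :=
  Set.ext fun _ => Submodule.mem_orthogonal S _ |>.symm

lemma dualSet_submodule (S : Submodule ℝ E) : dualSet (S : Set E) = perpSet S := by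
  ext y
  refine ⟨fun hy x hx => le_antisymm ?_ (hy x hx), fun hy x hx => (hy x hx).ge⟩
  simpa [inner_neg_left] using hy (-x) (S.neg_mem hx)

lemma isFRSeq_submodule_iff {k : ℕ} (S : Submodule ℝ E) (y : Fin k → E) :
    IsFRSeq (S : Set E) y ↔ ∀ i, y i ∈ perpSet S := by
  refine ⟨fun hy i => ?_, fun hy i x hx => (hy i x hx.1).ge⟩
  induction i using WellFoundedLT.induction with
  | ind i ih =>
    have hcut : frCut (S : Set E) y i = S :=
      Set.ext fun x => ⟨And.left, fun hx =>
        ⟨hx, fun j hj => by rw [real_inner_comm]; exact ih j hj x hx⟩⟩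
    simpa [hcut, dualSet_submodule] using hy i

lemma isFRSeq_one_iff (K : Set E) (y : Fin 1 → E) : IsFRSeq K y ↔ y 0 ∈ dualSet K := by
  have hcut : frCut K y 0 = K := Set.ext fun x => ⟨And.left, fun hx => ⟨hx, by simp⟩⟩
  rw [IsFRSeq, Fin.forall_fin_one, hcut]

section Witness

variable {m : ℕ}

def frWitness (a : ℝ) (z : E) : Fin (m + 2) → E :=
  fun i => if i = 0 then a • z else if i = 1 then -z else 0

lemma continuous_frWitness (z : E) :
    Continuous fun a : ℝ => (frWitness a z : Fin (m + 2) → E) :=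
  continuous_pi fun i => by unfold frWitness; split_ifs <;> fun_prop

lemma isFRSeq_frWitness {K : Set E} {z : E} (hz : z ∈ dualSet K) {a : ℝ} (ha : 0 < a) :
    IsFRSeq K (frWitness a z : Fin (m + 2) → E) := by
  intro i x hx
  unfold frWitness
  split_ifs with h0 h1
  · rw [real_inner_smul_right]
    exact mul_nonneg ha.le (hz x hx.1)
  · have hzx := hx.2 0 (h1 ▸ Fin.one_pos')
    simp only [frWitness, if_pos, real_inner_smul_left, mul_eq_zero, ha.ne', false_or] at hzx
    simp [inner_neg_right, real_inner_comm, hzx]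
  · simp

lemma not_isFRSeq_frWitness_zero {K : Set E} {x z : E} (hx : x ∈ K) (hxz : 0 < ⟪x, z⟫) :
    ¬ IsFRSeq K (frWitness 0 z : Fin (m + 2) → E) := by
  intro h
  have hcut : x ∈ frCut K (frWitness (m := m) 0 z) 1 := ⟨hx, fun j hj => by
    obtain rfl := (Fin.lt_one_iff j).mp hj
    simp [frWitness]⟩
  have hneg : ⟪x, -z⟫ < 0 := by rw [inner_neg_right]; linarith
  exact hneg.not_ge (by simpa [frWitness] using h 1 x hcut)

lemma not_isClosed_setOf_isFRSeq {K : Set E} {x z : E} (hx : x ∈ K) (hz : z ∈ dualSet K)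
    (hxz : 0 < ⟪x, z⟫) : ¬ IsClosed {y : Fin (m + 2) → E | IsFRSeq K y} := fun hcl =>
  not_isFRSeq_frWitness_zero hx hxz <|
    hcl.mem_of_tendsto ((continuous_frWitness z).continuousAt.tendsto.mono_left nhdsWithin_le_nhds)
      (eventually_nhdsWithin_of_forall fun _ ha => isFRSeq_frWitness hz (Set.mem_Ioi.mp ha))

end Witness

theorem stmt_10_general (K : Set Y) (hKcl : IsClosed K) (hKconv : Convex ℝ K)
    (hKcone : ∀ c : ℝ, 0 ≤ c → ∀ x ∈ K, c • x ∈ K) (hK0 : (0 : Y) ∈ K)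
    (k : ℕ) :
    ((¬ ∃ S : Submodule ℝ Y, K = (S : Set Y)) → 2 ≤ k →
      ¬ IsClosed {y : Fin k → Y | IsFRSeq K y}) ∧
    (((∃ S : Submodule ℝ Y, K = (S : Set Y)) ∨ k = 1) →
      IsClosed {y : Fin k → Y | IsFRSeq K y}) := by
  refine ⟨fun hK hk => ?_, ?_⟩
  · let C := ProperCone.ofIsClosedConvex K hKcl hKconv hKcone hK0
    obtain ⟨x, hx, hnx⟩ := C.toPointedCone.exists_mem_neg_notMem hK
    obtain ⟨z, hz, hxz⟩ := C.hyperplane_separation' hnx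
    obtain ⟨m, rfl⟩ := Nat.exists_eq_add_of_le' hk
    exact not_isClosed_setOf_isFRSeq hx hz (by simpa [inner_neg_left] using hxz)
  · rintro (⟨S, rfl⟩ | rfl)
    · simp_rw [isFRSeq_submodule_iff, perpSet_submodule, Set.ofPred_forall]
      exact isClosed_iInter fun i => S.isClosed_orthogonal.preimage (continuous_apply i)
    · simp_rw [isFRSeq_one_iff]
      exact (isClosed_dualSet K).preimage (continuous_apply 0)

/-- `FR_k(K)` is not closed when `K` is not a linear subspace and `k ≥ 2`; conversely,
if `K` is a linear subspace or `k = 1` then `FR_k(K)` is closed. -/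
theorem stmt_10 (K : Set Y) (hKcl : IsClosed K) (hKconv : Convex ℝ K)
    (hKcone : ∀ c : ℝ, 0 ≤ c → ∀ x ∈ K, c • x ∈ K) (hK0 : (0 : Y) ∈ K)
    (k : ℕ) (hk : 1 ≤ k) :
    ((¬ ∃ S : Submodule ℝ Y, K = (S : Set Y)) → 2 ≤ k →
      ¬ IsClosed {y : Fin k → Y | IsFRSeq K y}) ∧
    (((∃ S : Submodule ℝ Y, K = (S : Set Y)) ∨ k = 1) →
      IsClosed {y : Fin k → Y | IsFRSeq K y}) :=
  stmt_10_general K hKcl hKconv hKcone hK0 k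
end

section
/- Let (y_1,…,y_k) be a finite sequence of n×n real symmetric matrices with (y_1,…,y_k) ∈ FR_k(S^n_+), where S^n_+ is the cone of positive semidefinite matrices. Then there exists an invertible n×n matrix t such that (t^T y_1 t, …, t^T y_k t) is a regularized facial reduction sequence: there exist nonnegative integers p_1,…,p_k with p_1+…+p_k ≤ n such that for each i, the matrix t^T y_i t has an identity block of size p_i in rows/columns p_1+…+p_{i-1}+1 through p_1+…+p_i, zeros in the lower-right (n − p_1−…−p_i)-block and in the off-diagonal blocks between the identity block and that zero block, and arbitrary entries in the first p_1+…+p_{i-1} rows (and symmetric columns). -/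
/-!
Induct along the sequence, keeping `tᵀ y_j t` in regular form for the indices already treated.
If their blocks end at `m = p_1 + ⋯ + p_{i-1}`, then these matrices vanish on the trailing block
`[m, n)²`. So for `v` supported on `[m, n)`, the psd matrix `(t v)(t v)ᵀ` is orthogonal to all of
them, and the dual-cone condition makes the trailing block of `tᵀ y_i t` positive semidefinite.
Diagonalizing that block by a congruence that is the identity on the first `m` coordinates puts
`y_i` in regular form and leaves the earlier `tᵀ y_j t` regular.
-/

open Matrix

/-- Membership in the order-`k` facial reduction cone of the psd cone `S^n_+`,
with the trace inner product: each `y i` is symmetric, and `y i` lies in the dual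
(within symmetric matrices) of `S^n_+ ∩ y_1^⊥ ∩ ... ∩ y_{i-1}^⊥`. -/
def frSeqM {n k : ℕ} (y : Fin k → Matrix (Fin n) (Fin n) ℝ) : Prop :=
  (∀ i, (y i).IsSymm) ∧
  ∀ i : Fin k, ∀ x : Matrix (Fin n) (Fin n) ℝ, x.PosSemidef →
    (∀ j : Fin k, j < i → (y j * x).trace = 0) → 0 ≤ (y i * x).trace

section Patterns

variable {R : Type*} {n : ℕ}

def IsRegularTail [Zero R] [One R] (z : Matrix (Fin n) (Fin n) R) (μ p : ℕ) : Prop :=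
  ∀ a b : Fin n, μ ≤ (a : ℕ) → μ ≤ (b : ℕ) →
    z a b = if a = b ∧ (a : ℕ) < μ + p then 1 else 0

def FixesHead [Zero R] [One R] (s : Matrix (Fin n) (Fin n) R) (m : ℕ) : Prop :=
  ∀ a b : Fin n, ((a : ℕ) < m ∨ (b : ℕ) < m) → s a b = (1 : Matrix (Fin n) (Fin n) R) a b

theorem FixesHead.mul_apply [Semiring R] {s w : Matrix (Fin n) (Fin n) R} {m : ℕ}
    (hs : FixesHead s m) {c : Fin n} (hw : ∀ d : Fin n, m ≤ (d : ℕ) → w c d = 0) (b : Fin n) :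
    (w * s) c b = w c b := by
  rw [Matrix.mul_apply]
  by_cases hb : (b : ℕ) < m
  · simp [hs _ b (Or.inr hb), one_apply]
  · rw [hw b (not_lt.1 hb)]
    refine Finset.sum_eq_zero fun d _ => ?_
    by_cases hd : (d : ℕ) < m
    · rw [hs d b (Or.inl hd), one_apply_ne (by rintro rfl; exact hb hd), mul_zero]
    · rw [hw d (not_lt.1 hd), zero_mul]

theorem IsRegularTail.apply_eq_zero [Zero R] [One R] {z : Matrix (Fin n) (Fin n) R} {μ p m : ℕ}
    (hz : IsRegularTail z μ p) (hpm : μ + p ≤ m) {c d : Fin n} (hc : μ ≤ (c : ℕ))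
    (hd : μ ≤ (d : ℕ)) (hcd : m ≤ (c : ℕ) ∨ m ≤ (d : ℕ)) : z c d = 0 := by
  rw [hz c d hc hd, if_neg]
  rintro ⟨rfl, h⟩
  omega

theorem IsRegularTail.transpose_mul_mul [CommSemiring R] {z s : Matrix (Fin n) (Fin n) R}
    {μ p m : ℕ} (hz : IsRegularTail z μ p) (hpm : μ + p ≤ m) (hs : FixesHead s m) :
    IsRegularTail (sᵀ * z * s) μ p := by
  intro a b ha hb
  have hleft : ∀ d : Fin n, μ ≤ (d : ℕ) → (sᵀ * z) a d = z a d := fun d hd => by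
    rw [← transpose_apply (sᵀ * z), transpose_mul, transpose_transpose, hs.mul_apply]
    · rfl
    · exact fun c hc => hz.apply_eq_zero hpm (by omega) hd (Or.inl hc)
  rw [hs.mul_apply fun d hd => ?_, hleft b hb, hz a b ha hb]
  rw [hleft d (by omega)]
  exact hz.apply_eq_zero hpm ha (by omega) (Or.inr hd)

end Patterns

theorem Fin.exists_iff_lt_of_antitone {N : ℕ} {P : Fin N → Prop} [DecidablePred P]
    (hP : Antitone P) : ∃ p ≤ N, ∀ i, P i ↔ (i : ℕ) < p := by
  refine ⟨(Finset.univ.filter P).card, (Finset.card_le_univ _).trans_eq (Fintype.card_fin N),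
    fun i => ⟨fun hi => ?_, fun hi => ?_⟩⟩
  · have : Finset.Iic i ⊆ Finset.univ.filter P := fun j hj =>
      Finset.mem_filter.2 ⟨Finset.mem_univ j, hP (Finset.mem_Iic.1 hj) hi⟩
    have := Finset.card_le_card this
    rw [Fin.card_Iic] at this
    omega
  · by_contra hPi
    have : Finset.univ.filter P ⊆ Finset.Iio i := fun j hj =>
      Finset.mem_Iio.2 (lt_of_not_ge fun hij => hPi (hP hij (Finset.mem_filter.1 hj).2))
    have := Finset.card_le_card this
    rw [Fin.card_Iio] at this
    omega

theorem Matrix.IsHermitian.transpose_eigenvectorUnitary_mul_mul {N : Type*} [Fintype N]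
    [DecidableEq N] {A : Matrix N N ℝ} (hA : A.IsHermitian) :
    (hA.eigenvectorUnitary : Matrix N N ℝ)ᵀ * A * hA.eigenvectorUnitary =
      diagonal hA.eigenvalues := by
  have := hA.conjStarAlgAut_star_eigenvectorUnitary
  rw [Unitary.conjStarAlgAut_apply] at this
  simpa [star_eq_conjTranspose, conjTranspose_eq_transpose_of_trivial] using this

theorem Matrix.PosSemidef.exists_isUnit_transpose_mul_mul_eq_diagonal {N : ℕ}
    {A : Matrix (Fin N) (Fin N) ℝ} (hA : A.PosSemidef) :
    ∃ t : Matrix (Fin N) (Fin N) ℝ, IsUnit t ∧ ∃ p ≤ N,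
      tᵀ * A * t = diagonal fun i : Fin N => if (i : ℕ) < p then 1 else 0 := by
  set U : Matrix (Fin N) (Fin N) ℝ := (hA.1.eigenvectorUnitary : Matrix (Fin N) (Fin N) ℝ)
  set lam := hA.1.eigenvalues
  have hlam : ∀ i, 0 ≤ lam i := hA.eigenvalues_nonneg
  set σ := Tuple.sort fun i => -lam i
  obtain ⟨p, hpN, hp⟩ : ∃ p ≤ N, ∀ i, 0 < lam (σ i) ↔ (i : ℕ) < p := by
    refine Fin.exists_iff_lt_of_antitone fun i j hij (hj : 0 < lam (σ j)) => hj.trans_le ?_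
    simpa using Tuple.monotone_sort (fun i => -lam i) hij
  set c : Fin N → ℝ := fun i => if lam i = 0 then 1 else (√(lam i))⁻¹
  have hc : ∀ i, c i ≠ 0 := fun i => by
    by_cases h : lam i = 0
    · simp [c, h]
    · simp [c, h, Real.sqrt_ne_zero'.2 ((hlam i).lt_of_ne' h)]
  have hclam : ∀ i, c i * lam i * c i = if 0 < lam i then 1 else 0 := fun i => by
    rcases (hlam i).eq_or_lt with h | h
    · simp [← h]
    · have hs : √(lam i) ^ 2 = lam i := Real.sq_sqrt h.le
      simp only [c, h.ne', h, if_false, if_true]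
      field_simp
      linarith
  set M := U * diagonal c
  refine ⟨M.submatrix id σ, ?_, p, hpN, ?_⟩
  · rw [isUnit_iff_isUnit_det, det_permute', det_mul, det_diagonal, isUnit_iff_ne_zero]
    refine mul_ne_zero (by simp) (mul_ne_zero ?_ (Finset.prod_ne_zero_iff.2 fun i _ => hc i))
    exact ((isUnit_iff_isUnit_det _).1 Unitary.isUnit_coe).ne_zero
  · have hM : Mᵀ * A * M = diagonal fun i => c i * lam i * c i := by
      simp only [M, transpose_mul, diagonal_transpose, Matrix.mul_assoc]
      rw [← Matrix.mul_assoc Uᵀ, ← Matrix.mul_assoc (Uᵀ * A),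
        hA.1.transpose_eigenvectorUnitary_mul_mul, diagonal_mul_diagonal, diagonal_mul_diagonal]
      simp only [lam, mul_assoc]
    have : (M.submatrix id σ)ᵀ * A * M.submatrix id σ = (Mᵀ * A * M).submatrix σ σ := by
      rw [transpose_submatrix, ← submatrix_id_id A,
        ← submatrix_mul _ _ _ _ _ Function.bijective_id, submatrix_id_id,
        ← submatrix_mul _ _ _ _ _ Function.bijective_id]
    rw [this, hM, submatrix_diagonal_equiv]
    congr 1
    funext i
    simp [hclam, hp]

theorem posSemidef_submatrix_natAdd {m r : ℕ} {A : Matrix (Fin (m + r)) (Fin (m + r)) ℝ}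
    (hA : A.IsSymm)
    (hq : ∀ v : Fin (m + r) → ℝ, (∀ a : Fin (m + r), (a : ℕ) < m → v a = 0) → 0 ≤ v ⬝ᵥ A *ᵥ v) :
    (A.submatrix (Fin.natAdd m) (Fin.natAdd m)).PosSemidef := by
  refine posSemidef_iff_dotProduct_mulVec.2
    ⟨isHermitian_iff_isSymm.2 (hA.submatrix _), fun u => ?_⟩
  have := hq (Fin.addCases 0 u) fun a ha => by
    induction a using Fin.addCases with
    | left i => simp
    | right j => simp at ha
  simpa [dotProduct, mulVec, Fin.sum_univ_add] using this

theorem exists_fixesHead_isRegularTail {n m : ℕ} (hm : m ≤ n) {A : Matrix (Fin n) (Fin n) ℝ}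
    (hA : A.IsSymm)
    (hq : ∀ v : Fin n → ℝ, (∀ a : Fin n, (a : ℕ) < m → v a = 0) → 0 ≤ v ⬝ᵥ A *ᵥ v) :
    ∃ s : Matrix (Fin n) (Fin n) ℝ, IsUnit s ∧ FixesHead s m ∧
      ∃ q, m + q ≤ n ∧ IsRegularTail (sᵀ * A * s) m q := by
  obtain ⟨r, rfl⟩ := Nat.exists_eq_add_of_le hm
  obtain ⟨t, ht, q, hqr, htB⟩ :=
    (posSemidef_submatrix_natAdd hA hq).exists_isUnit_transpose_mul_mul_eq_diagonal
  set s := (fromBlocks (1 : Matrix (Fin m) (Fin m) ℝ) 0 0 t).submatrix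
    finSumFinEquiv.symm finSumFinEquiv.symm
  refine ⟨s, ?_, ?_, q, by omega, ?_⟩
  · rw [isUnit_iff_isUnit_det] at ht ⊢
    simpa [s, det_fromBlocks_zero₁₂] using ht
  · intro a b hab
    induction a using Fin.addCases <;> induction b using Fin.addCases <;>
      simp_all [s, one_apply, Fin.ext_iff] <;> omega
  · intro a b ha hb
    induction a using Fin.addCases with
    | left i => simp at ha; omega
    | right i =>
    induction b using Fin.addCases with
    | left j => simp at hb; omega
    | right j =>
    have := congrFun (congrFun htB i) j
    simp only [mul_apply, Fin.sum_univ_add, s] at this ⊢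
    simpa [ite_and, diagonal_apply] using this

theorem Finset.sum_Iio_add_le_sum_Iio {α : Type*} [LinearOrder α] [LocallyFiniteOrderBot α]
    (f : α → ℕ) {i j : α} (hji : j < i) : ∑ l ∈ Iio j, f l + f j ≤ ∑ l ∈ Iio i, f l := by
  rw [add_comm, ← sum_insert notMem_Iio_self, Iio_insert]
  exact sum_le_sum_of_subset fun l hl => mem_Iio.2 ((mem_Iic.1 hl).trans_lt hji)

theorem Matrix.trace_mul_vecMulVec_self {ι R : Type*} [Fintype ι] [CommSemiring R]
    (M : Matrix ι ι R) (w : ι → R) :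
    (M * vecMulVec w w).trace = w ⬝ᵥ M *ᵥ w := by
  rw [mul_vecMulVec, trace_vecMulVec, dotProduct_comm]

theorem Matrix.dotProduct_transpose_mul_mul_mulVec {ι R : Type*} [Fintype ι] [CommSemiring R]
    (t M : Matrix ι ι R) (v : ι → R) : v ⬝ᵥ (tᵀ * M * t) *ᵥ v = (t *ᵥ v) ⬝ᵥ M *ᵥ (t *ᵥ v) := by
  rw [← mulVec_mulVec, ← mulVec_mulVec, dotProduct_mulVec, vecMul_transpose]

theorem Matrix.dotProduct_mulVec_eq_zero_of_tail {R : Type*} [Semiring R] {N m : ℕ}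
    {M : Matrix (Fin N) (Fin N) R} (hM : ∀ a b : Fin N, m ≤ (a : ℕ) → m ≤ (b : ℕ) → M a b = 0)
    {v : Fin N → R}
    (hv : ∀ a : Fin N, (a : ℕ) < m → v a = 0) : v ⬝ᵥ M *ᵥ v = 0 := by
  simp only [dotProduct, mulVec]
  refine Finset.sum_eq_zero fun a _ => ?_
  by_cases ha : (a : ℕ) < m
  · rw [hv a ha, zero_mul]
  refine mul_eq_zero_of_right _ (Finset.sum_eq_zero fun b _ => ?_)
  by_cases hb : (b : ℕ) < m
  · rw [hv b hb, mul_zero]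
  · rw [hM a b (not_lt.1 ha) (not_lt.1 hb), zero_mul]

theorem frSeqM.dotProduct_mulVec_nonneg {n k : ℕ} {y : Fin k → Matrix (Fin n) (Fin n) ℝ}
    (hy : frSeqM y) {i : Fin k} {t : Matrix (Fin n) (Fin n) ℝ} {m : ℕ}
    (hprev : ∀ j < i, ∀ a b : Fin n, m ≤ (a : ℕ) → m ≤ (b : ℕ) → (tᵀ * y j * t) a b = 0)
    {v : Fin n → ℝ} (hv : ∀ a : Fin n, (a : ℕ) < m → v a = 0) :
    0 ≤ v ⬝ᵥ (tᵀ * y i * t) *ᵥ v := by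
  rw [dotProduct_transpose_mul_mul_mulVec, ← trace_mul_vecMulVec_self]
  refine hy.2 i _ (by simpa using posSemidef_vecMulVec_self_star (t *ᵥ v)) fun j hj => ?_
  rw [trace_mul_vecMulVec_self, ← dotProduct_transpose_mul_mul_mulVec]
  exact dotProduct_mulVec_eq_zero_of_tail (hprev j hj) hv

theorem frSeqM.exists_regularizing_prefix {n k : ℕ} {y : Fin k → Matrix (Fin n) (Fin n) ℝ}
    (hy : frSeqM y) (N : ℕ) (hN : N ≤ k) :
    ∃ t : Matrix (Fin n) (Fin n) ℝ, IsUnit t ∧ ∃ p : Fin k → ℕ,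
      (∀ j : Fin k, N ≤ (j : ℕ) → p j = 0) ∧ ∑ j, p j ≤ n ∧
      ∀ i : Fin k, (i : ℕ) < N →
        IsRegularTail (tᵀ * y i * t) (∑ j ∈ Finset.Iio i, p j) (p i) := by
  induction N with
  | zero => exact ⟨1, isUnit_one, 0, fun _ _ => rfl, by simp, fun i hi => absurd hi (by omega)⟩
  | succ N ih =>
  obtain ⟨t, ht, p, hp0, hpn, hreg⟩ := ih (by omega)
  set iN : Fin k := ⟨N, by omega⟩
  set m := ∑ j ∈ Finset.Iio iN, p j
  have hm : m = ∑ j, p j := Finset.sum_subset (Finset.subset_univ _) fun j _ hj =>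
    hp0 j (Fin.le_def.1 (by simpa using hj))
  have hprev : ∀ j < iN, ∑ l ∈ Finset.Iio j, p l + p j ≤ m := fun j hj =>
    Finset.sum_Iio_add_le_sum_Iio p hj
  have hsymm : (tᵀ * y iN * t).IsSymm := by
    simp [IsSymm, transpose_mul, (hy.1 iN).eq, Matrix.mul_assoc]
  obtain ⟨s, hs, hsm, q, hqn, hsq⟩ := exists_fixesHead_isRegularTail (hm.le.trans hpn) hsymm
    fun v hv => hy.dotProduct_mulVec_nonneg (fun j hj a b ha hb => by
      have hj' := hprev j hj
      exact (hreg j hj).apply_eq_zero hj' (by omega) (by omega) (Or.inl ha)) hv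
  have hconj : ∀ M : Matrix (Fin n) (Fin n) ℝ,
      (t * s)ᵀ * M * (t * s) = sᵀ * (tᵀ * M * t) * s := fun M => by
    simp [transpose_mul, Matrix.mul_assoc]
  set p' : Fin k → ℕ := p + Pi.single iN q
  have hsum : ∀ i ≤ iN, ∑ j ∈ Finset.Iio i, p' j = ∑ j ∈ Finset.Iio i, p j :=
    fun i hi => by simp [p', Finset.sum_add_distrib, Finset.sum_pi_single', hi]
  refine ⟨t * s, ht.mul hs, p', fun j hj => ?_, ?_, fun i hi => ?_⟩
  · simp [p', hp0 j (by omega), iN, Fin.ext_iff, show (j : ℕ) ≠ N by omega]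
  · simp [p', Finset.sum_add_distrib, ← hm]
    omega
  rw [hsum i (Fin.mk_le_mk.2 (by omega) : i ≤ iN), hconj]
  rcases (Nat.lt_succ_iff_lt_or_eq.1 hi) with hi | hi
  · have hiN : i ≠ iN := by simp [iN, Fin.ext_iff]; omega
    simpa [p', hiN] using (hreg i hi).transpose_mul_mul (hprev i hi) hsm
  · obtain rfl : i = iN := Fin.ext hi
    simpa [p', hp0 iN le_rfl] using hsq

/-- Any facial reduction sequence for `S^n_+` can be rotated by a congruence
`y ↦ tᵀ y t` (with `t` invertible) into a regularized facial reduction sequence. -/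
theorem stmt_11 (n k : ℕ) (y : Fin k → Matrix (Fin n) (Fin n) ℝ) (hy : frSeqM y) :
    ∃ t : Matrix (Fin n) (Fin n) ℝ, IsUnit t ∧
      ∃ p : Fin k → ℕ, (∑ i, p i) ≤ n ∧
        ∀ i : Fin k, ∀ a b : Fin n,
          (∑ j ∈ Finset.Iio i, p j) ≤ (a : ℕ) → (∑ j ∈ Finset.Iio i, p j) ≤ (b : ℕ) →
          (t.transpose * y i * t) a b =
            if a = b ∧ (a : ℕ) < (∑ j ∈ Finset.Iio i, p j) + p i then 1 else 0 := by
  obtain ⟨t, ht, p, -, hpn, hreg⟩ := hy.exists_regularizing_prefix k le_rfl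
  exact ⟨t, ht, p, hpn, fun i => hreg i i.2⟩
end

section
/- Let A* : S^3 → ℝ^3 be given by A*y = (a_1 • y, a_2 • y, a_3 • y), where a_1 = E_{11}, a_2 = E_{13}+E_{31}+E_{22}, a_3 = E_{11}+E_{22}. Then the closure of A*(S^3_+) equals { (α,β,γ) : γ ≥ α ≥ 0 }, and the frontier cl(A* S^3_+) \ A* S^3_+ equals { (0,β,γ) : γ ≥ 0, β ≠ γ }. In particular A*(S^3_+) is not closed. -/
/-!
For `y ⪰ 0`, indexed from `0`, we have `A* y = (y₀₀, y₀₂ + y₁₁ + y₂₀, y₀₀ + y₁₁)`.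
Since `y₀₀, y₁₁ ≥ 0`, and a vanishing diagonal entry of a positive semidefinite matrix kills
its row, the image is `{α > 0, α ≤ γ} ∪ {α = 0 ≤ γ = β}`; every such point is attained by a
rank-one matrix plus a diagonal one. The points `(0, β, γ)` with `β ≠ γ` are limits of
`(ε, β, γ + ε)` as `ε → 0⁺` but are not in the image.
-/

open Matrix

theorem Matrix.PosSemidef.apply_eq_zero_of_diag_eq_zero {n : Type*} [Fintype n]
    {M : Matrix n n ℝ} (hM : M.PosSemidef) {i : n} (hi : M i i = 0) (j : n) : M i j = 0 := by
  have hdet := (hM.submatrix ![i, j]).det_nonneg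
  have hsymm : M j i = M i j := hM.isHermitian.apply i j
  simp only [det_fin_two, submatrix_apply, cons_val_zero, cons_val_one, hi, hsymm] at hdet
  nlinarith [sq_nonneg (M i j)]

section

variable {R : Type*} [Semiring R] (y : Matrix (Fin 3) (Fin 3) R)

theorem trace_E11_mul : (!![1, 0, 0; 0, 0, 0; 0, 0, 0] * y).trace = y 0 0 := by
  simp [trace_fin_three, vecMul, dotProduct, Fin.sum_univ_three]

theorem trace_E13_add_E22_add_E31_mul :
    (!![0, 0, 1; 0, 1, 0; 1, 0, 0] * y).trace = y 2 0 + y 1 1 + y 0 2 := by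
  simp [trace_fin_three, vecMul, dotProduct, Fin.sum_univ_three]

theorem trace_E11_add_E22_mul : (!![1, 0, 0; 0, 1, 0; 0, 0, 0] * y).trace = y 0 0 + y 1 1 := by
  simp [trace_fin_three, vecMul, dotProduct, Fin.sum_univ_three]

end

def psdImage : Set (Fin 3 → ℝ) := {v | (0 < v 0 ∧ v 0 ≤ v 2) ∨ (v 0 = 0 ∧ 0 ≤ v 2 ∧ v 1 = v 2)}

theorem mem_psdImage_of_posSemidef {y : Matrix (Fin 3) (Fin 3) ℝ} (hy : y.PosSemidef) :
    ![y 0 0, y 2 0 + y 1 1 + y 0 2, y 0 0 + y 1 1] ∈ psdImage := by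
  have h00 : 0 ≤ y 0 0 := hy.diag_nonneg
  have h11 : 0 ≤ y 1 1 := hy.diag_nonneg
  simp only [psdImage, Set.mem_ofPred_eq, cons_val_zero, cons_val_one, cons_val_two, head_cons,
    tail_cons]
  rcases h00.eq_or_lt' with h00 | h00
  · have h02 : y 0 2 = 0 := hy.apply_eq_zero_of_diag_eq_zero h00 2
    have h20 : y 2 0 = 0 := (hy.isHermitian.apply 0 2).trans h02
    exact Or.inr ⟨h00, by linarith, by rw [h00, h02, h20]; ring⟩
  · exact Or.inl ⟨h00, by linarith⟩

theorem exists_posSemidef_of_mem_psdImage {v : Fin 3 → ℝ} (hv : v ∈ psdImage) :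
    ∃ y : Matrix (Fin 3) (Fin 3) ℝ, y.PosSemidef ∧
      v = ![y 0 0, y 2 0 + y 1 1 + y 0 2, y 0 0 + y 1 1] := by
  rcases hv with ⟨h0, h02⟩ | ⟨h0, h2, h12⟩
  · set t := (v 1 - v 2 + v 0) / 2
    let u : Fin 3 → ℝ := ![v 0, 0, t]
    refine ⟨(v 0)⁻¹ • vecMulVec u u + diagonal ![0, v 2 - v 0, 0], ?_, ?_⟩
    · refine .add ?_ (.diagonal ?_)
      · simpa using (posSemidef_vecMulVec_self_star u).smul (inv_nonneg.mpr h0.le)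
      · intro i; fin_cases i <;> simp [h02]
    · ext i; fin_cases i <;> simp [u] <;> field_simp <;> ring
  · refine ⟨diagonal ![0, v 2, 0], .diagonal ?_, ?_⟩
    · intro i; fin_cases i <;> simp [h2]
    · ext i; fin_cases i <;> simp [h0, h12]

theorem isClosed_setOf_nonneg_le : IsClosed {v : Fin 3 → ℝ | 0 ≤ v 0 ∧ v 0 ≤ v 2} :=
  (isClosed_le continuous_const (continuous_apply 0)).inter
    (isClosed_le (continuous_apply 0) (continuous_apply 2))

theorem closure_psdImage : closure psdImage = {v | 0 ≤ v 0 ∧ v 0 ≤ v 2} := by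
  refine (closure_minimal ?_ isClosed_setOf_nonneg_le).antisymm fun v ⟨h0, h02⟩ ↦ ?_
  · rintro v (⟨h0, h02⟩ | ⟨h0, h2, -⟩)
    · exact ⟨h0.le, h02⟩
    · exact ⟨h0.ge, h0 ▸ h2⟩
  have hlim :
      Filter.Tendsto (fun ε : ℝ ↦ v + ε • ![1, 0, 1]) (nhdsWithin 0 (Set.Ioi 0)) (nhds v) :=
    ((continuous_const.add (continuous_id.smul continuous_const)).tendsto' 0 v
      (by simp)).mono_left nhdsWithin_le_nhds
  refine mem_closure_of_tendsto hlim (eventually_nhdsWithin_of_forall fun ε (hε : 0 < ε) ↦ ?_)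
  left
  simp only [Pi.add_apply, Pi.smul_apply, smul_eq_mul, cons_val_zero, cons_val_two, tail_cons,
    head_cons, mul_one]
  constructor <;> linarith

theorem closure_psdImage_diff :
    closure psdImage \ psdImage = {v | v 0 = 0 ∧ 0 ≤ v 2 ∧ v 1 ≠ v 2} := by
  rw [closure_psdImage]
  ext v
  simp only [psdImage, Set.mem_sdiff, Set.mem_ofPred_eq]
  constructor
  · rintro ⟨⟨h0, h02⟩, hv⟩
    obtain h0 | h0 := h0.eq_or_lt'
    · exact ⟨h0, h0 ▸ h02, fun h12 ↦ hv (.inr ⟨h0, h0 ▸ h02, h12⟩)⟩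
    · exact absurd (.inl ⟨h0, h02⟩) hv
  · rintro ⟨h0, h2, h12⟩
    refine ⟨⟨h0.ge, h0 ▸ h2⟩, ?_⟩
    rintro (⟨h, -⟩ | ⟨-, -, h⟩)
    exacts [h.ne' h0, h12 h]

/-- For `a₁ = E₁₁`, `a₂ = E₁₃+E₃₁+E₂₂`, `a₃ = E₁₁+E₂₂`, the image `A* S³₊` has closure
`{(α,β,γ) : γ ≥ α ≥ 0}` and frontier `{(0,β,γ) : γ ≥ 0, β ≠ γ}`; in particular it is
not closed. -/
theorem stmt_13 (a₁ a₂ a₃ : Matrix (Fin 3) (Fin 3) ℝ)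
    (ha₁ : a₁ = !![1, 0, 0; 0, 0, 0; 0, 0, 0])
    (ha₂ : a₂ = !![0, 0, 1; 0, 1, 0; 1, 0, 0])
    (ha₃ : a₃ = !![1, 0, 0; 0, 1, 0; 0, 0, 0])
    (img : Set (Fin 3 → ℝ))
    (himg : img = {v | ∃ y : Matrix (Fin 3) (Fin 3) ℝ, y.PosSemidef ∧
        v = ![(a₁ * y).trace, (a₂ * y).trace, (a₃ * y).trace]}) :
    closure img = {v | 0 ≤ v 0 ∧ v 0 ≤ v 2} ∧
    closure img \ img = {v | v 0 = 0 ∧ 0 ≤ v 2 ∧ v 1 ≠ v 2} ∧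
    ¬ IsClosed img := by
  have himg_eq : img = psdImage := by
    subst ha₁ ha₂ ha₃ himg
    ext v
    simp only [Set.mem_ofPred_eq, trace_E11_mul, trace_E13_add_E22_add_E31_mul,
      trace_E11_add_E22_mul]
    exact ⟨fun ⟨y, hy, hv⟩ ↦ hv ▸ mem_psdImage_of_posSemidef hy,
      exists_posSemidef_of_mem_psdImage⟩
  subst himg_eq
  refine ⟨closure_psdImage, closure_psdImage_diff, fun hclosed ↦ ?_⟩
  have hmem : ![0, 1, 0] ∈ closure psdImage \ psdImage := by
    rw [closure_psdImage_diff]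
    simp
  rwa [hclosed.closure_eq, Set.sdiff_self] at hmem
end

section
/- Let K be a closed convex cone and A : ℝ^m → Y a linear map. Suppose there exist (a_1,…,a_{k+1}) ∈ FR_{k+1}(K*) with k ≥ 1 and (y_1,…,y_{ℓ+1}) ∈ FR_{ℓ+1}(K) with ℓ ≥ 1 such that a_i ∈ range(A) for all i = 1,…,k+1, y_j ∈ ker(A*) for j = 1,…,ℓ, ⟨a_i, y_{ℓ+1}⟩ = 0 for i ≤ k and ⟨a_{k+1}, y_{ℓ+1}⟩ = −1. Then the set A* K* = { A* y : y ∈ K* } is not closed. -/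
open scoped RealInnerProductSpace

variable {Y : Type*} [NormedAddCommGroup Y] [InnerProductSpace ℝ Y] [FiniteDimensional ℝ Y]

/-!
Suppose `A* K*` is closed. Bipolarity and Farkas' lemma in the form
`ProperCone.relative_hyperplane_separation` show that `A* y_{ℓ+1}` lies in the closure of
`A* K*`: for any `x` with `A x ∈ K`, the vector `A x` is orthogonal to `y_1, …, y_ℓ ∈ ker A*`,
so `⟪A* y_{ℓ+1}, x⟫ = ⟪y_{ℓ+1}, A x⟫ ≥ 0` because `y_{ℓ+1} ∈ (K ∩ y_1^⊥ ∩ … ∩ y_ℓ^⊥)*`.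
Hence `A* y_{ℓ+1} = A* u` for some `u ∈ K*`. Since every `a_i` lies in the range of `A`,
`⟪a_i, u⟫ = ⟪a_i, y_{ℓ+1}⟫`, which vanishes for `i ≤ k`; so `u ∈ K* ∩ a_1^⊥ ∩ … ∩ a_k^⊥` and
`0 ≤ ⟪a_{k+1}, u⟫ = -1`, a contradiction.
-/

section

variable {E F : Type*} [NormedAddCommGroup E] [InnerProductSpace ℝ E]
  [NormedAddCommGroup F] [InnerProductSpace ℝ F]

theorem dualSet_dualSet_of_isClosed [CompleteSpace E] {K : Set E} (hK0 : (0 : E) ∈ K)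
    (hKconv : Convex ℝ K) (hKcone : ∀ c : ℝ, 0 ≤ c → ∀ x ∈ K, c • x ∈ K)
    (hKcl : IsClosed K) : dualSet (dualSet K) = K := by
  let C : ProperCone ℝ E :=
    { carrier := K
      zero_mem' := hK0
      add_mem' := fun {x z} hx hz => by
        have h := hKcone 2 zero_le_two _ (hKconv hx hz (by norm_num : (0 : ℝ) ≤ 2⁻¹)
          (by norm_num : (0 : ℝ) ≤ 2⁻¹) (by norm_num))
        convert h using 1
        module
      smul_mem' := fun c x hx => hKcone c c.2 x hx
      isClosed' := hKcl }
  exact congrArg SetLike.coe (ProperCone.innerDual_innerDual C)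

theorem IsFRSeq.inner_last_nonneg {K : Set E} {k : ℕ} {a : Fin (k + 1) → E}
    (ha : IsFRSeq K a) {u : E} (hu : u ∈ K)
    (horth : ∀ i : Fin (k + 1), (i : ℕ) < k → ⟪a i, u⟫ = 0) :
    0 ≤ ⟪a (Fin.last k), u⟫ := by
  rw [real_inner_comm]
  exact ha (Fin.last k) u ⟨hu, fun i hi => horth i (by simpa [Fin.lt_def] using hi)⟩

theorem ContinuousLinearMap.inner_eq_of_mem_range_of_adjoint_eq [CompleteSpace E]
    [CompleteSpace F] {A : E →L[ℝ] F} {x : F} (hx : x ∈ Set.range A) {u v : F}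
    (h : A.adjoint u = A.adjoint v) : ⟪x, u⟫ = ⟪x, v⟫ := by
  obtain ⟨w, rfl⟩ := hx
  rw [← adjoint_inner_right, h, adjoint_inner_right]

theorem IsFRSeq.adjoint_last_mem_closure_image_dualSet [CompleteSpace E] [CompleteSpace F]
    {K : Set F} (hK0 : (0 : F) ∈ K) (hKconv : Convex ℝ K)
    (hKcone : ∀ c : ℝ, 0 ≤ c → ∀ x ∈ K, c • x ∈ K) (hKcl : IsClosed K)
    (A : E →L[ℝ] F) {l : ℕ} {y : Fin (l + 1) → F} (hy : IsFRSeq K y)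
    (hyN : ∀ j : Fin (l + 1), (j : ℕ) < l → A.adjoint (y j) = 0) :
    A.adjoint (y (Fin.last l)) ∈ closure (A.adjoint '' dualSet K) := by
  change _ ∈ (ProperCone.innerDual K).map A.adjoint
  rw [ProperCone.relative_hyperplane_separation]
  intro x hx
  rw [ContinuousLinearMap.adjoint_adjoint] at hx
  have hAxK : A x ∈ K := by
    rwa [← dualSet_dualSet_of_isClosed hK0 hKconv hKcone hKcl]
  rw [ContinuousLinearMap.adjoint_inner_left, real_inner_comm]
  refine hy (Fin.last l) (A x) ⟨hAxK, fun j hj => ?_⟩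
  rw [← ContinuousLinearMap.adjoint_inner_left, hyN j (by simpa [Fin.lt_def] using hj),
    inner_zero_left]

end

theorem stmt_14_general (K : Set Y) (hKcl : IsClosed K) (hKconv : Convex ℝ K)
    (hKcone : ∀ c : ℝ, 0 ≤ c → ∀ x ∈ K, c • x ∈ K) (hK0 : (0 : Y) ∈ K)
    (m k l : ℕ)
    (A : EuclideanSpace ℝ (Fin m) →L[ℝ] Y)
    (a : Fin (k + 1) → Y) (y : Fin (l + 1) → Y)
    (ha : IsFRSeq (dualSet K) a) (hy : IsFRSeq K y)
    (haR : ∀ i, a i ∈ Set.range A)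
    (hyN : ∀ j : Fin (l + 1), (j : ℕ) < l → ContinuousLinearMap.adjoint A (y j) = 0)
    (hzero : ∀ i : Fin (k + 1), (i : ℕ) < k → ⟪a i, y (Fin.last l)⟫ = 0)
    (hone : ⟪a (Fin.last k), y (Fin.last l)⟫ = -1) :
    ¬ IsClosed {v : EuclideanSpace ℝ (Fin m) |
        ∃ u ∈ dualSet K, v = ContinuousLinearMap.adjoint A u} := by
  intro hclosed
  have himage : A.adjoint '' dualSet K ⊆ {v | ∃ u ∈ dualSet K, v = A.adjoint u} := by
    rintro _ ⟨u, hu, rfl⟩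
    exact ⟨u, hu, rfl⟩
  obtain ⟨u, hu, hAu⟩ := hclosed.closure_subset <| closure_mono himage
    (hy.adjoint_last_mem_closure_image_dualSet hK0 hKconv hKcone hKcl A hyN)
  have hinner : ∀ i, ⟪a i, u⟫ = ⟪a i, y (Fin.last l)⟫ := fun i =>
    (ContinuousLinearMap.inner_eq_of_mem_range_of_adjoint_eq (haR i) hAu).symm
  have hnonneg := ha.inner_last_nonneg hu fun i hi => (hinner i).trans (hzero i hi)
  rw [hinner, hone] at hnonneg
  norm_num at hnonneg

/-- Sufficient condition for non-closedness of `A* K*`: the existence of suitable facial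
reduction sequences in `FR_{k+1}(K*)` and `FR_{l+1}(K)`. -/
theorem stmt_14 (K : Set Y) (hKcl : IsClosed K) (hKconv : Convex ℝ K)
    (hKcone : ∀ c : ℝ, 0 ≤ c → ∀ x ∈ K, c • x ∈ K) (hK0 : (0 : Y) ∈ K)
    (m k l : ℕ) (hk : 1 ≤ k) (hl : 1 ≤ l)
    (A : EuclideanSpace ℝ (Fin m) →L[ℝ] Y)
    (a : Fin (k + 1) → Y) (y : Fin (l + 1) → Y)
    (ha : IsFRSeq (dualSet K) a) (hy : IsFRSeq K y)
    (haR : ∀ i, a i ∈ Set.range A)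
    (hyN : ∀ j : Fin (l + 1), (j : ℕ) < l → ContinuousLinearMap.adjoint A (y j) = 0)
    (hzero : ∀ i : Fin (k + 1), (i : ℕ) < k → ⟪a i, y (Fin.last l)⟫ = 0)
    (hone : ⟪a (Fin.last k), y (Fin.last l)⟫ = -1) :
    ¬ IsClosed {v : EuclideanSpace ℝ (Fin m) |
        ∃ u ∈ dualSet K, v = ContinuousLinearMap.adjoint A u} :=
  stmt_14_general K hKcl hKconv hKcone hK0 m k l A a y ha hy haR hyN hzero hone
end

section
/- Let K be a closed convex cone, T an invertible linear map on Y, and S ⊆ Y any subset. Then: (i) T^{-1}(S*) = (T* S)*, where S* = { y : ⟨y,x⟩ ≥ 0 ∀ x ∈ S }; (ii) T^{-1}(S^⊥) = (T* S)^⊥; and (iii) if additionally T(K) = K, then T*((K ∩ S^⊥)*) = (K ∩ (T* S)^⊥)*. -/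
open scoped RealInnerProductSpace

variable {Y : Type*} [NormedAddCommGroup Y] [InnerProductSpace ℝ Y] [FiniteDimensional ℝ Y]

/-!
Everything follows from `⟪x, T† y⟫ = ⟪T x, y⟫`. For (iii), `T K = K` gives `T⁻¹ K = K`, so by (ii)
`K ∩ (T† S)^⊥ = T⁻¹ (K ∩ S^⊥)`; and for bijective `T` the adjoint maps `C*` onto `(T⁻¹ C)*`
for every set `C`, the adjoint being surjective because its kernel is `(range T)^⊥ = 0`.
-/

namespace ContinuousLinearMap

theorem preimage_dualSet (T : Y →L[ℝ] Y) (S : Set Y) :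
    T ⁻¹' dualSet S = dualSet (adjoint T '' S) := by
  ext y
  simp [dualSet, adjoint_inner_left]

theorem preimage_perpSet (T : Y →L[ℝ] Y) (S : Set Y) :
    T ⁻¹' perpSet S = perpSet (adjoint T '' S) := by
  ext y
  simp [perpSet, adjoint_inner_left]

theorem adjoint_surjective {T : Y →L[ℝ] Y} (hT : Function.Surjective T) :
    Function.Surjective (adjoint T) := by
  have hker : (adjoint T).ker = ⊥ := by
    rw [← orthogonal_range, LinearMap.range_eq_top.mpr hT, Submodule.top_orthogonal_eq_bot]
  exact LinearMap.injective_iff_surjective.mp (LinearMap.ker_eq_bot.mp hker)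

theorem image_adjoint_dualSet {T : Y →L[ℝ] Y} (hT : Function.Surjective T) (C : Set Y) :
    adjoint T '' dualSet C = dualSet (T ⁻¹' C) := by
  ext z
  constructor
  · rintro ⟨w, hw, rfl⟩ x hx
    rw [adjoint_inner_right]
    exact hw (T x) hx
  · intro hz
    obtain ⟨w, rfl⟩ := adjoint_surjective hT z
    refine ⟨w, fun c hc => ?_, rfl⟩
    obtain ⟨x, rfl⟩ := hT c
    rw [← adjoint_inner_right]
    exact hz x hc

end ContinuousLinearMap

theorem stmt_15_general (K : Set Y) (T : Y →L[ℝ] Y) (hT : Function.Bijective T) (S : Set Y) :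
    T ⁻¹' (dualSet S) = dualSet (ContinuousLinearMap.adjoint T '' S) ∧
    T ⁻¹' (perpSet S) = perpSet (ContinuousLinearMap.adjoint T '' S) ∧
    (T '' K = K →
      ContinuousLinearMap.adjoint T '' (dualSet (K ∩ perpSet S)) =
        dualSet (K ∩ perpSet (ContinuousLinearMap.adjoint T '' S))) := by
  refine ⟨T.preimage_dualSet S, T.preimage_perpSet S, fun hK => ?_⟩
  have hKpre : T ⁻¹' K = K := by
    nth_rw 1 [← hK]
    exact hT.injective.preimage_image K
  rw [ContinuousLinearMap.image_adjoint_dualSet hT.surjective, Set.preimage_inter, hKpre,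
    T.preimage_perpSet]

/-- For an invertible linear map `T` and any set `S`:
(i) the preimage of `S*` under `T` equals `(T* S)*`;
(ii) the preimage of the orthogonal complement of `S` under `T` equals `(T* S)^⊥`;
(iii) if moreover `T(K) = K`, then `T*((K ∩ S^⊥)*) = (K ∩ (T* S)^⊥)*`. -/
theorem stmt_15 (K : Set Y) (hKcl : IsClosed K) (hKconv : Convex ℝ K)
    (hKcone : ∀ c : ℝ, 0 ≤ c → ∀ x ∈ K, c • x ∈ K) (hK0 : (0 : Y) ∈ K)
    (T : Y →L[ℝ] Y) (hT : Function.Bijective T) (S : Set Y) :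
    T ⁻¹' (dualSet S) = dualSet (ContinuousLinearMap.adjoint T '' S) ∧
    T ⁻¹' (perpSet S) = perpSet (ContinuousLinearMap.adjoint T '' S) ∧
    (T '' K = K →
      ContinuousLinearMap.adjoint T '' (dualSet (K ∩ perpSet S)) =
        dualSet (K ∩ perpSet (ContinuousLinearMap.adjoint T '' S))) :=
  stmt_15_general K T hT S
end

section
/- Consider the 3×3 SDP system: find x_1, x_2 ∈ ℝ such that b − x_1 a_1 − x_2 a_2 ⪰ 0, where a_1 = E_{11}, a_2 = E_{12}+E_{21}, b = E_{13}+E_{31}+E_{22}. This system is weakly infeasible: (i) it is infeasible, as certified by (y_1, y_2, y_3) ∈ FR_3(S^3_+) with y_1 = E_{33}, y_2 = 2E_{22} − E_{13} − E_{31}, y_3 = −(E_{13}+E_{31})/2, which satisfy a_i • y_j = 0 for all i ∈ {1,2}, j ∈ {1,2,3}, b • y_1 = b • y_2 = 0, b • y_3 = −1; and (ii) its alternative system (y ⪰ 0, a_1 • y = a_2 • y = 0, b • y = −1) is infeasible, since (a_1, b) ∈ FR_2(S^3_+). -/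
/-!
A psd matrix with a zero diagonal entry `x i i` has zero `i`-th row and column (its `2 × 2`
principal minors are nonnegative). With `0`-based indices: on `y₁^⊥ = {x 2 2 = 0}` this kills
`x 0 2`, so `y₂ • x = 2 x 1 1 ≥ 0` and `y₃ • x = 0`; on `a₁^⊥ = {x 0 0 = 0}` it gives
`b • x = x 1 1 ≥ 0`. A slack matrix `s = b - x₁ a₁ - x₂ a₂ ⪰ 0` would then be orthogonal to `y₁`
and `y₂`, forcing `0 ≤ y₃ • s = b • y₃ = -1`; a solution `y` of the alternative system lies in
`a₁^⊥`, forcing `0 ≤ b • y = -1`.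
-/

open Matrix

theorem Matrix.PosSemidef.apply_eq_zero_of_diag_eq_zero_left {n : Type*} [Fintype n]
    {x : Matrix n n ℝ} (hx : x.PosSemidef) {i : n} (hi : x i i = 0) (j : n) : x i j = 0 := by
  have hdet := (hx.submatrix ![i, j]).det_nonneg
  have hsym : x j i = x i j := by simpa using hx.isHermitian.apply i j
  rw [det_fin_two] at hdet
  simp only [submatrix_apply, cons_val_zero, cons_val_one, hi, hsym] at hdet
  nlinarith [sq_nonneg (x i j)]

theorem Matrix.PosSemidef.apply_eq_zero_of_diag_eq_zero_right {n : Type*} [Fintype n]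
    {x : Matrix n n ℝ} (hx : x.PosSemidef) {j : n} (hj : x j j = 0) (i : n) : x i j = 0 := by
  simpa [hx.apply_eq_zero_of_diag_eq_zero_left hj i] using hx.isHermitian.apply j i

theorem Matrix.trace_of_fin_three_mul {R : Type*} [CommRing R] (a b c d e f g h i : R)
    (z : Matrix (Fin 3) (Fin 3) R) :
    (!![a, b, c; d, e, f; g, h, i] * z).trace =
      a * z 0 0 + b * z 1 0 + c * z 2 0 + d * z 0 1 + e * z 1 1 + f * z 2 1 +
        g * z 0 2 + h * z 1 2 + i * z 2 2 := by
  simp [trace_fin_three, vecMul, dotProduct, Fin.sum_univ_three]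
  ring

theorem frSeqM.not_exists_posSemidef_sub_sum {n m k : ℕ} {y : Fin k → Matrix (Fin n) (Fin n) ℝ}
    (hy : frSeqM y) (a : Fin m → Matrix (Fin n) (Fin n) ℝ) (b : Matrix (Fin n) (Fin n) ℝ)
    (ha : ∀ i j, (a i * y j).trace = 0) {l : Fin k} (hb : ∀ j < l, (b * y j).trace = 0)
    (hl : (b * y l).trace < 0) :
    ¬ ∃ x : Fin m → ℝ, (b - ∑ i, x i • a i).PosSemidef := by
  rintro ⟨x, hs⟩
  have hpair : ∀ j, (y j * (b - ∑ i, x i • a i)).trace = (b * y j).trace := by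
    intro j
    simp [trace_mul_comm (y j), sub_mul, Finset.sum_mul, trace_sum, ha]
  have := hy.2 l _ hs fun j hj => by rw [hpair]; exact hb j hj
  linarith [hpair l]

theorem frSeqM_primal_certificate :
    frSeqM ![!![0, 0, 0; 0, 0, 0; 0, 0, 1], !![0, 0, -1; 0, 2, 0; -1, 0, 0],
      (!![0, 0, -(1/2); 0, 0, 0; -(1/2), 0, 0] : Matrix (Fin 3) (Fin 3) ℝ)] := by
  refine ⟨fun i => ?_, fun i x hx hprev => ?_⟩
  · fin_cases i <;> ext j l <;> fin_cases j <;> fin_cases l <;> rfl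
  · have h22 : x 2 2 = 0 → x 0 2 = 0 ∧ x 2 0 = 0 := fun h =>
      ⟨hx.apply_eq_zero_of_diag_eq_zero_right h 0, hx.apply_eq_zero_of_diag_eq_zero_left h 0⟩
    fin_cases i
    · simpa [-cons_mul, trace_of_fin_three_mul] using hx.diag_nonneg
    · have := h22 (by simpa [-cons_mul, trace_of_fin_three_mul] using hprev 0 (by decide))
      simp [-cons_mul, trace_of_fin_three_mul, this, hx.diag_nonneg]
    · have := h22 (by simpa [-cons_mul, trace_of_fin_three_mul] using hprev 0 (by decide))
      simp [-cons_mul, trace_of_fin_three_mul, this]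

theorem frSeqM_dual_certificate :
    frSeqM ![!![1, 0, 0; 0, 0, 0; 0, 0, 0],
      (!![0, 0, 1; 0, 1, 0; 1, 0, 0] : Matrix (Fin 3) (Fin 3) ℝ)] := by
  refine ⟨fun i => ?_, fun i x hx hprev => ?_⟩
  · fin_cases i <;> ext j l <;> fin_cases j <;> fin_cases l <;> rfl
  · fin_cases i
    · simpa [-cons_mul, trace_of_fin_three_mul] using hx.diag_nonneg
    · have h00 : x 0 0 = 0 := by
        simpa [-cons_mul, trace_of_fin_three_mul] using hprev 0 (by decide)
      simp [-cons_mul, trace_of_fin_three_mul, hx.apply_eq_zero_of_diag_eq_zero_left h00,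
        hx.apply_eq_zero_of_diag_eq_zero_right h00, hx.diag_nonneg]

/-- The 3×3 SDP system `b - x₁ a₁ - x₂ a₂ ⪰ 0` with `a₁ = E₁₁`, `a₂ = E₁₂+E₂₁`,
`b = E₁₃+E₃₁+E₂₂` is weakly infeasible: `(y₁,y₂,y₃) ∈ FR₃(S³₊)` certifies infeasibility,
`(a₁,b) ∈ FR₂(S³₊)`, and both the system and its alternative system are infeasible. -/
theorem stmt_19 (a₁ a₂ b y₁ y₂ y₃ : Matrix (Fin 3) (Fin 3) ℝ)
    (ha₁ : a₁ = !![1, 0, 0; 0, 0, 0; 0, 0, 0])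
    (ha₂ : a₂ = !![0, 1, 0; 1, 0, 0; 0, 0, 0])
    (hb : b = !![0, 0, 1; 0, 1, 0; 1, 0, 0])
    (hy₁ : y₁ = !![0, 0, 0; 0, 0, 0; 0, 0, 1])
    (hy₂ : y₂ = !![0, 0, -1; 0, 2, 0; -1, 0, 0])
    (hy₃ : y₃ = !![0, 0, -(1/2); 0, 0, 0; -(1/2), 0, 0]) :
    frSeqM ![y₁, y₂, y₃] ∧
    (a₁ * y₁).trace = 0 ∧ (a₂ * y₁).trace = 0 ∧ (b * y₁).trace = 0 ∧
    (a₁ * y₂).trace = 0 ∧ (a₂ * y₂).trace = 0 ∧ (b * y₂).trace = 0 ∧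
    (a₁ * y₃).trace = 0 ∧ (a₂ * y₃).trace = 0 ∧ (b * y₃).trace = -1 ∧
    (¬ ∃ x₁ x₂ : ℝ, (b - x₁ • a₁ - x₂ • a₂).PosSemidef) ∧
    frSeqM ![a₁, b] ∧
    (¬ ∃ y : Matrix (Fin 3) (Fin 3) ℝ, y.PosSemidef ∧
        (a₁ * y).trace = 0 ∧ (a₂ * y).trace = 0 ∧ (b * y).trace = -1) := by
  have hy : frSeqM ![y₁, y₂, y₃] := by subst_vars; exact frSeqM_primal_certificate
  have hab : frSeqM ![a₁, b] := by subst_vars; exact frSeqM_dual_certificate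
  refine ⟨hy, ?_, ?_, ?_, ?_, ?_, ?_, ?_, ?_, ?_, ?_, hab, ?_⟩
  iterate 9 (subst_vars; norm_num [trace_fin_three, cons_val_two, vecHead, vecTail])
  · rintro ⟨x₁, x₂, hs⟩
    refine hy.not_exists_posSemidef_sub_sum (l := 2) ![a₁, a₂] b ?_ ?_ ?_
      ⟨![x₁, x₂], by simpa [Fin.sum_univ_two, sub_sub] using hs⟩ <;>
    · subst_vars
      norm_num [Fin.forall_fin_succ, trace_fin_three, cons_val_two, vecHead, vecTail]
  · rintro ⟨y, hpsd, h₁, -, hby⟩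
    have : 0 ≤ (b * y).trace := hab.2 1 y hpsd (by simpa [Fin.forall_fin_two] using h₁)
    linarith
end
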